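/- arXiv:1711.06219 — 2 statements merged into one kernel-verified Lean document; each statement's English description precedes it below -/
import Mathlib

section
/- Fix an integer q ≥ 1 and a real W > 0. For every integer n ≥ 2, the Lebesgue measure of the set {u ∈ (0, 1/e) : B_L(u) · (n / log n)^{q/2} ≤ W} is at most (W/e) · (log n / n)^{q/2}. Consequently, if U is uniformly distributed on (0,1) (the distribution of the p-value under the null hypothesis), the probability that B_L(U)·(n/log n)^{q/2} ≤ W and U < 1/e tends to 0 as n → ∞. -/
/-!
On `(0, 1/e)` we have `log u ≤ -1`, so `B_L(u) ≥ e u`. Hence the sublevel set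
`{B_L · c ≤ W}` with `c = (n / log n)^{q/2}` lies in the interval `(0, W / (e c)]`,
whose length `(W/e) (log n / n)^{q/2}` tends to `0` since `log n = o(n)` and `q/2 > 0`.
-/

open MeasureTheory Filter Real

/-- The paper's `B_L`. -/
noncomputable def robustLowerBound (p : ℝ) : ℝ := -exp 1 * p * log p

lemma self_le_neg_mul_log {u : ℝ} (hu : 0 ≤ u) (hue : u ≤ 1 / exp 1) : u ≤ -u * log u := by
  rcases hu.eq_or_lt with rfl | hu
  · simp
  have hlog : log u ≤ -1 := by
    simpa only [one_div, log_inv, log_exp] using log_le_log hu hue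
  nlinarith

lemma exp_one_mul_le_robustLowerBound {u : ℝ} (hu : 0 ≤ u) (hue : u ≤ 1 / exp 1) :
    exp 1 * u ≤ robustLowerBound u := by
  have := mul_le_mul_of_nonneg_left (self_le_neg_mul_log hu hue) (exp_pos 1).le
  unfold robustLowerBound
  linarith

lemma robustLowerBound_sublevel_subset_Ioc {c W : ℝ} (hc : 0 < c) :
    {u : ℝ | u ∈ Set.Ioo 0 (1 / exp 1) ∧ robustLowerBound u * c ≤ W} ⊆
      Set.Ioc 0 (W / exp 1 * c⁻¹) := by
  rintro u ⟨⟨hu, hue⟩, hle⟩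
  have hlin : exp 1 * u * c ≤ W :=
    (mul_le_mul_of_nonneg_right (exp_one_mul_le_robustLowerBound hu.le hue.le) hc.le).trans hle
  refine ⟨hu, ?_⟩
  rw [div_mul_eq_mul_div, ← div_eq_mul_inv, le_div_iff₀ (exp_pos 1), le_div_iff₀ hc]
  linarith

lemma volume_robustLowerBound_sublevel_le {c : ℝ} (hc : 0 < c) (W : ℝ) :
    volume {u : ℝ | u ∈ Set.Ioo 0 (1 / exp 1) ∧ robustLowerBound u * c ≤ W} ≤
      ENNReal.ofReal (W / exp 1 * c⁻¹) := by
  calc _ ≤ volume (Set.Ioc 0 (W / exp 1 * c⁻¹)) :=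
        measure_mono (robustLowerBound_sublevel_subset_Ioc hc)
    _ = _ := by rw [volume_Ioc, sub_zero]

lemma tendsto_log_div_self_rpow_atTop {s : ℝ} (hs : 0 < s) :
    Tendsto (fun n : ℕ => (log n / n) ^ s) atTop (nhds 0) := by
  have hlog : Tendsto (fun n : ℕ => log n / n) atTop (nhds 0) :=
    isLittleO_log_id_atTop.tendsto_div_nhds_zero.comp tendsto_natCast_atTop_atTop
  simpa only [zero_rpow hs.ne'] using hlog.rpow_const (Or.inr hs.le)

lemma inv_div_log_rpow {n : ℕ} (hn : 2 ≤ n) (s : ℝ) :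
    (((n : ℝ) / log n) ^ s)⁻¹ = (log n / n) ^ s := by
  have hn1 : (1 : ℝ) < n := by exact_mod_cast hn
  rw [← inv_rpow (div_pos (by linarith) (log_pos hn1)).le, inv_div]

theorem arlb_null_consistency_general (q : ℕ) (hq : 1 ≤ q) (W : ℝ) :
    (∀ n : ℕ, 2 ≤ n →
      volume {u : ℝ | u ∈ Set.Ioo 0 (1 / Real.exp 1) ∧
          (-Real.exp 1 * u * Real.log u) * ((n : ℝ) / Real.log n) ^ ((q : ℝ) / 2) ≤ W} ≤
        ENNReal.ofReal ((W / Real.exp 1) * (Real.log n / n) ^ ((q : ℝ) / 2))) ∧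
    Tendsto (fun n : ℕ =>
        volume {u : ℝ | u ∈ Set.Ioo 0 1 ∧
          (-Real.exp 1 * u * Real.log u) * ((n : ℝ) / Real.log n) ^ ((q : ℝ) / 2) ≤ W ∧
          u < 1 / Real.exp 1})
      atTop (nhds 0) := by
  have hbound : ∀ n : ℕ, 2 ≤ n →
      volume {u : ℝ | u ∈ Set.Ioo 0 (1 / exp 1) ∧
          robustLowerBound u * ((n : ℝ) / log n) ^ ((q : ℝ) / 2) ≤ W} ≤
        ENNReal.ofReal ((W / exp 1) * (log n / n) ^ ((q : ℝ) / 2)) := by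
    intro n hn
    have hn1 : (1 : ℝ) < n := by exact_mod_cast hn
    rw [← inv_div_log_rpow hn]
    exact volume_robustLowerBound_sublevel_le
      (rpow_pos_of_pos (div_pos (by linarith) (log_pos hn1)) _) W
  refine ⟨hbound, ?_⟩
  have hq2 : (0 : ℝ) < q / 2 := by positivity
  have hub := ENNReal.tendsto_ofReal
    ((tendsto_log_div_self_rpow_atTop hq2).const_mul (W / exp 1))
  rw [mul_zero, ENNReal.ofReal_zero] at hub
  refine tendsto_of_tendsto_of_tendsto_of_le_of_le' tendsto_const_nhds hub
    (Eventually.of_forall fun _ => zero_le) ?_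
  filter_upwards [eventually_ge_atTop 2] with n hn
  refine (measure_mono ?_).trans (hbound n hn)
  rintro u ⟨⟨hu, -⟩, hle, hue⟩
  exact ⟨⟨hu, hue⟩, hle⟩

/-- Null-hypothesis half of large sample consistency of the ARLB. For `q ≥ 1` and
`W > 0`: (a) for each `n ≥ 2` the Lebesgue measure of the set of
`u ∈ (0, 1/e)` with `B_L(u) (n/log n)^{q/2} ≤ W` is at most
`(W/e) (log n / n)^{q/2}`, where `B_L(u) = -e u log u`; (b) consequently, for `U`
uniform on `(0,1)` (the null distribution of the p-value), the probability that
`B_L(U) (n/log n)^{q/2} ≤ W` and `U < 1/e` tends to `0` as `n → ∞`. -/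
theorem arlb_null_consistency (q : ℕ) (hq : 1 ≤ q) (W : ℝ) (hW : 0 < W) :
    (∀ n : ℕ, 2 ≤ n →
      volume {u : ℝ | u ∈ Set.Ioo 0 (1 / Real.exp 1) ∧
          (-Real.exp 1 * u * Real.log u) * ((n : ℝ) / Real.log n) ^ ((q : ℝ) / 2) ≤ W} ≤
        ENNReal.ofReal ((W / Real.exp 1) * (Real.log n / n) ^ ((q : ℝ) / 2))) ∧
    Tendsto (fun n : ℕ =>
        volume {u : ℝ | u ∈ Set.Ioo 0 1 ∧
          (-Real.exp 1 * u * Real.log u) * ((n : ℝ) / Real.log n) ^ ((q : ℝ) / 2) ≤ W ∧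
          u < 1 / Real.exp 1})
      atTop (nhds 0) :=
  arlb_null_consistency_general q hq W
end

section
/- Let n ≥ 1 be an integer and let x̄ > 0 and b > 0 be reals. Then ∫_0^∞ λ^n · e^{−n·λ·x̄} · b/(λ + b)² dλ = ( b · Γ(n) / (n·x̄)^{n−1} ) · ( n·(x̄·b + 1) · e^{n·x̄·b} · E_n(n·x̄·b) − 1 ), where Γ is the real Gamma function. -/
/-! Write `c = n x̄`, `z = c b` and `K m = ∫₀^∞ lᵐ e^{-cl} / (l + b) dl`. Integrating
`lⁿ e^{-cl} (l + b)⁻²` by parts against `-(l + b)⁻¹` gives `n K (n-1) - c K n`, and splitting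
`lⁿ = lⁿ⁻¹ (l + b) - b lⁿ⁻¹` gives `K n = (n-1)! / cⁿ - b K (n-1)`; so
`∫₀^∞ lⁿ e^{-cl} (l + b)⁻² dl = (n + z) K (n-1) - (n-1)! / cⁿ⁻¹`. The substitution `l = b (t - 1)`
gives `K 0 = e^z E₁(z)`, and the recurrence `n Eₙ₊₁(z) = e^{-z} - z Eₙ(z)` (integration by parts
on `(1, ∞)`) propagates this to `K m = m! / cᵐ · e^z Eₘ₊₁(z)`. -/

open MeasureTheory Set Real
open scoped Nat

noncomputable def expIntegralE (n : ℕ) (z : ℝ) : ℝ :=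
  ∫ t in Ioi 1, exp (-(z * t)) / t ^ n

theorem integral_Ioi_eq_neg_of_hasDerivAt_of_integrableOn {E : Type*} [NormedAddCommGroup E]
    [NormedSpace ℝ E] [CompleteSpace E] {f f' : ℝ → E} {a : ℝ}
    (hderiv : ∀ x ∈ Ici a, HasDerivAt f (f' x) x) (hf' : IntegrableOn f' (Ioi a))
    (hf : IntegrableOn f (Ioi a)) : ∫ x in Ioi a, f' x = -f a := by
  simpa using integral_Ioi_of_hasDerivAt_of_tendsto' hderiv hf'
    (tendsto_zero_of_hasDerivAt_of_integrableOn_Ioi (fun x hx => hderiv x hx.out.le) hf' hf)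

theorem integral_comp_add_right_Ioi {E : Type*} [NormedAddCommGroup E] [NormedSpace ℝ E]
    (f : ℝ → E) (a d : ℝ) : ∫ x in Ioi a, f (x + d) = ∫ x in Ioi (a + d), f x := by
  have h := (measurePreserving_add_right volume d).setIntegral_preimage_emb
    (measurableEmbedding_addRight d) f (Ioi (a + d))
  rwa [preimage_add_const_Ioi, add_sub_cancel_right] at h

theorem hasDerivAt_inv_pow (n : ℕ) {t : ℝ} (ht : t ≠ 0) :
    HasDerivAt (fun t => (t ^ n)⁻¹) (-n / t ^ (n + 1)) t := by
  refine ((hasDerivAt_pow n t).inv (pow_ne_zero n ht)).congr_deriv ?_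
  rcases n with _ | n
  · simp
  · simp only [Nat.add_sub_cancel]
    field_simp
    ring

theorem hasDerivAt_exp_neg_mul (c x : ℝ) :
    HasDerivAt (fun t => exp (-(c * t))) (-c * exp (-(c * x))) x := by
  simpa [mul_comm] using ((hasDerivAt_id x).const_mul c).neg.exp

section

variable {z : ℝ}

theorem integrableOn_exp_neg_mul_div_pow (hz : 0 < z) (n : ℕ) :
    IntegrableOn (fun t => exp (-(z * t)) / t ^ n) (Ioi 1) := by
  refine (exp_neg_integrableOn_Ioi 1 hz).mono' ?_ ?_
  · exact (by fun_prop : Measurable fun t : ℝ => exp (-(z * t)) / t ^ n).aestronglyMeasurable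
  · filter_upwards [ae_restrict_mem measurableSet_Ioi] with t (ht : 1 < t)
    rw [norm_div, norm_of_nonneg (exp_nonneg _), norm_of_nonneg (by positivity), neg_mul]
    exact div_le_self (exp_nonneg _) (one_le_pow₀ ht.le)

theorem expIntegralE_succ (hz : 0 < z) (n : ℕ) :
    n * expIntegralE (n + 1) z = exp (-z) - z * expIntegralE n z := by
  have hE (k : ℕ) := integrableOn_exp_neg_mul_div_pow hz k
  have hderiv : ∀ t ∈ Ici (1 : ℝ), HasDerivAt (fun t => exp (-(z * t)) * (t ^ n)⁻¹)
      (-(z * (exp (-(z * t)) / t ^ n) + n * (exp (-(z * t)) / t ^ (n + 1)))) t :=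
    fun t (ht : 1 ≤ t) => ((hasDerivAt_exp_neg_mul z t).mul
      (hasDerivAt_inv_pow n (by positivity))).congr_deriv (by ring)
  have hFTC := integral_Ioi_eq_neg_of_hasDerivAt_of_integrableOn hderiv
    (((hE n).const_mul z).add ((hE (n + 1)).const_mul n)).neg
    (by simpa only [div_eq_mul_inv] using hE n)
  rw [integral_neg, integral_add ((hE n).const_mul z) ((hE (n + 1)).const_mul n),
    integral_const_mul, integral_const_mul] at hFTC
  simp only [mul_one, one_pow, inv_one, neg_inj] at hFTC
  rw [expIntegralE, expIntegralE]
  linarith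

end

section

variable {c b : ℝ}

theorem integral_pow_mul_exp_neg_mul_Ioi (hc : 0 < c) (m : ℕ) :
    ∫ l in Ioi 0, l ^ m * exp (-(c * l)) = m ! / c ^ (m + 1) := by
  have h := integral_rpow_mul_exp_neg_mul_Ioi (a := m + 1) (by positivity) hc
  simp only [add_sub_cancel_right, rpow_natCast] at h
  rw [h, Gamma_nat_eq_factorial, ← Nat.cast_add_one, rpow_natCast, one_div, inv_pow,
    inv_mul_eq_div]

theorem integrableOn_pow_mul_exp_neg_mul_div_add_pow (hc : 0 < c) (hb : 0 < b) (m k : ℕ) :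
    IntegrableOn (fun l => l ^ m * exp (-(c * l)) / (l + b) ^ k) (Ioi 0) := by
  have hpow : IntegrableOn (fun l : ℝ => l ^ m * exp (-(c * l))) (Ioi 0) := by
    simpa using integrableOn_rpow_mul_exp_neg_mul_rpow (s := m) (p := 1)
      (by linarith [m.cast_nonneg (α := ℝ)]) one_pos hc
  refine (hpow.div_const (b ^ k)).mono' ?_ ?_
  · exact (by fun_prop : Measurable fun l : ℝ => l ^ m * exp (-(c * l)) / (l + b) ^ k)
      |>.aestronglyMeasurable
  · filter_upwards [ae_restrict_mem measurableSet_Ioi] with l (hl : 0 < l)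
    rw [norm_of_nonneg (by positivity)]
    exact div_le_div_of_nonneg_left (by positivity) (by positivity)
      (pow_le_pow_left₀ hb.le (by linarith) k)

theorem integral_exp_neg_mul_div_add (hb : 0 < b) :
    ∫ l in Ioi 0, exp (-(c * l)) / (l + b) = exp (c * b) * expIntegralE 1 (c * b) := by
  have hscale := integral_comp_mul_left_Ioi' (fun u => exp (-(c * u)) / u) 1 hb
  have hshift := integral_comp_add_right_Ioi (fun u => exp (-(c * u)) / u) 0 b
  simp only [mul_one, zero_add, smul_eq_mul] at hscale hshift
  calc ∫ l in Ioi 0, exp (-(c * l)) / (l + b)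
      = exp (c * b) * ∫ l in Ioi 0, exp (-(c * (l + b))) / (l + b) := by
        rw [← integral_const_mul]
        refine setIntegral_congr_fun measurableSet_Ioi fun l _ => ?_
        rw [mul_add, neg_add, exp_add, exp_neg (c * b)]
        field_simp
    _ = exp (c * b) * ∫ t in Ioi 1, b * (exp (-(c * (b * t))) / (b * t)) := by
        rw [hshift, ← hscale, integral_const_mul]
    _ = exp (c * b) * expIntegralE 1 (c * b) := by
        rw [expIntegralE]
        congr 1
        refine setIntegral_congr_fun measurableSet_Ioi fun t _ => ?_
        rw [pow_one, ← mul_assoc]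
        field_simp

theorem integral_pow_succ_mul_exp_neg_mul_div_add (hc : 0 < c) (hb : 0 < b) (m : ℕ) :
    ∫ l in Ioi 0, l ^ (m + 1) * exp (-(c * l)) / (l + b) =
      m ! / c ^ (m + 1) - b * ∫ l in Ioi 0, l ^ m * exp (-(c * l)) / (l + b) := by
  have hsplit : ∀ l ∈ Ioi (0 : ℝ), l ^ (m + 1) * exp (-(c * l)) / (l + b) =
      l ^ m * exp (-(c * l)) - b * (l ^ m * exp (-(c * l)) / (l + b)) := by
    intro l (hl : 0 < l)
    field_simp
    ring
  have hpow : IntegrableOn (fun l => l ^ m * exp (-(c * l))) (Ioi 0) := by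
    simpa using integrableOn_pow_mul_exp_neg_mul_div_add_pow hc hb m 0
  have hK := (integrableOn_pow_mul_exp_neg_mul_div_add_pow hc hb m 1).const_mul b
  simp only [pow_one] at hK
  rw [setIntegral_congr_fun measurableSet_Ioi hsplit, integral_sub hpow hK,
    integral_const_mul, integral_pow_mul_exp_neg_mul_Ioi hc]

theorem integral_pow_mul_exp_neg_mul_div_add (hc : 0 < c) (hb : 0 < b) (m : ℕ) :
    ∫ l in Ioi 0, l ^ m * exp (-(c * l)) / (l + b) =
      m ! / c ^ m * exp (c * b) * expIntegralE (m + 1) (c * b) := by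
  induction m with
  | zero => simpa using integral_exp_neg_mul_div_add (c := c) hb
  | succ m ih =>
    have hE := expIntegralE_succ (mul_pos hc hb) (m + 1)
    rw [integral_pow_succ_mul_exp_neg_mul_div_add hc hb, ih, Nat.factorial_succ]
    push_cast at hE ⊢
    rw [show (m + 1 : ℝ) * m ! / c ^ (m + 1) * exp (c * b) * expIntegralE (m + 1 + 1) (c * b) =
      m ! / c ^ (m + 1) * exp (c * b) * ((m + 1) * expIntegralE (m + 1 + 1) (c * b)) by ring,
      hE, exp_neg]
    field_simp
    ring

theorem integral_pow_succ_mul_exp_neg_mul_div_add_sq (hc : 0 < c) (hb : 0 < b) (m : ℕ) :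
    ∫ l in Ioi 0, l ^ (m + 1) * exp (-(c * l)) / (l + b) ^ 2 =
      (m + 1 + c * b) * (∫ l in Ioi 0, l ^ m * exp (-(c * l)) / (l + b)) - m ! / c ^ m := by
  set K : ℕ → ℝ → ℝ := fun k l => l ^ k * exp (-(c * l)) / (l + b) with hKdef
  have hKint (k : ℕ) : IntegrableOn (K k) (Ioi 0) := by
    simpa using integrableOn_pow_mul_exp_neg_mul_div_add_pow hc hb k 1
  have hderiv : ∀ l ∈ Ici (0 : ℝ), HasDerivAt (K (m + 1))
      ((m + 1) * K m l - c * K (m + 1) l - l ^ (m + 1) * exp (-(c * l)) / (l + b) ^ 2) l := by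
    intro l (hl : 0 ≤ l)
    refine (((hasDerivAt_pow (m + 1) l).mul (hasDerivAt_exp_neg_mul c l)).div
      ((hasDerivAt_id l).add_const b) (by positivity)).congr_deriv ?_
    simp only [hKdef, Pi.mul_apply, Nat.add_sub_cancel, id, Nat.cast_add, Nat.cast_one]
    field_simp
    ring
  have hK' : IntegrableOn (fun l => (m + 1 : ℝ) * K m l - c * K (m + 1) l) (Ioi 0) :=
    ((hKint m).const_mul _).sub ((hKint (m + 1)).const_mul c)
  have hI := integrableOn_pow_mul_exp_neg_mul_div_add_pow hc hb (m + 1) 2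
  have hFTC :=
    integral_Ioi_eq_neg_of_hasDerivAt_of_integrableOn hderiv (hK'.sub hI) (hKint (m + 1))
  rw [integral_sub hK' hI, integral_sub ((hKint m).const_mul _) ((hKint (m + 1)).const_mul c),
    integral_const_mul, integral_const_mul] at hFTC
  have hK0 : K (m + 1) 0 = 0 := by simp [hKdef]
  rw [hK0, neg_zero, integral_pow_succ_mul_exp_neg_mul_div_add hc hb] at hFTC
  have hpow : c * (m ! / c ^ (m + 1)) = m ! / c ^ m := by
    rw [pow_succ]
    field_simp
  simp only [hKdef] at hFTC
  linear_combination -hFTC - hpow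

end

/-- Marginal density identity for an i.i.d. Exponential(λ) sample of size `n` with
sample mean `x̄ > 0` under the intrinsic (Scaled Beta 2) prior `π(λ) = b/(λ+b)²`:
`∫₀^∞ λⁿ e^{-nλx̄} b/(λ+b)² dλ
  = (b Γ(n)/(nx̄)^{n-1}) (n(x̄b+1) e^{nx̄b} E_n(nx̄b) - 1)`,
where `E_n(c) = ∫₁^∞ e^{-ct} t^{-n} dt` is the exponential integral function. -/
theorem exponential_intrinsic_marginal (n : ℕ) (hn : 1 ≤ n) (xbar b : ℝ)
    (hx : 0 < xbar) (hb : 0 < b) :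
    ∫ l in Set.Ioi (0 : ℝ), l ^ n * Real.exp (-(n * l * xbar)) * (b / (l + b) ^ 2) =
      b * Real.Gamma n / (n * xbar) ^ (n - 1) *
        ((n : ℝ) * (xbar * b + 1) * Real.exp (n * xbar * b) *
            (∫ t in Set.Ioi (1 : ℝ), Real.exp (-(n * xbar * b * t)) / t ^ n) - 1) := by
  obtain ⟨m, rfl⟩ := Nat.exists_eq_add_of_le' hn
  have hc : 0 < ((m + 1 : ℕ) : ℝ) * xbar := by positivity
  have hintegrand : ∀ l ∈ Ioi (0 : ℝ),
      l ^ (m + 1) * exp (-((m + 1 : ℕ) * l * xbar)) * (b / (l + b) ^ 2) =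
        b * (l ^ (m + 1) * exp (-((m + 1 : ℕ) * xbar * l)) / (l + b) ^ 2) := fun l _ => by
    rw [mul_right_comm _ l]
    ring
  rw [setIntegral_congr_fun measurableSet_Ioi hintegrand, integral_const_mul,
    integral_pow_succ_mul_exp_neg_mul_div_add_sq hc hb, integral_pow_mul_exp_neg_mul_div_add hc hb,
    Nat.add_sub_cancel, Nat.cast_add_one, Gamma_nat_eq_factorial, expIntegralE]
  field_simp
  ring
end
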